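/- Fix c ∈ (0,1) and set λ₋ = (1−√c)² and λ₊ = (1+√c)². For every x ∈ (λ₋, λ₊), the principal value integral PV ∫_{λ₋}^{λ₊} f_MP(t) / (t−x) dt, defined as the limit as ε → 0⁺ of ∫_{λ₋}^{x−ε} f_MP(t)/(t−x) dt + ∫_{x+ε}^{λ₊} f_MP(t)/(t−x) dt, exists and equals (1 − c − x) / (2cx). (This is the Hilbert transform Re[m̌_F(x)] of the Marčenko–Pastur law.) -/

import Mathlib

/-- The Marčenko–Pastur density: `f_MP c x = √((x-λ₋)(λ₊-x))/(2πcx)` on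
`(λ₋, λ₊)` and `0` otherwise, where `λ₋ = (1-√c)²`, `λ₊ = (1+√c)²`. -/
noncomputable def fMP (c x : ℝ) : ℝ :=
  if (1 - Real.sqrt c) ^ 2 < x ∧ x < (1 + Real.sqrt c) ^ 2 then
    Real.sqrt ((x - (1 - Real.sqrt c) ^ 2) * ((1 + Real.sqrt c) ^ 2 - x)) /
      (2 * Real.pi * c * x)
  else 0

open Real Set Filter Topology

/-!
Dividing by `2πcx`, the integrand is `x √((t - λ₋)(λ₊ - t)) / (t (t - x))`, which has an elementary
primitive `G u = r log |u - x| + H u` on `[λ₋, λ₊] \ {x}`, where `r = √((x - λ₋)(λ₊ - x))` and `H`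
is continuous on all of `[λ₋, λ₊]`. As `log |u - x|` is even about `x`, `G (x - ε) - G (x + ε) → 0`,
so the principal value is `G λ₊ - G λ₋`. At the endpoints the two arcsines in `H` equal `±π/2` and
the logarithms cancel, leaving `π (√(λ₋ λ₊) - x) = π (1 - c - x)`.
-/

theorem tendsto_integral_add_integral_of_hasDerivAt_log_add {H g : ℝ → ℝ} {a b x r : ℝ}
    (hax : a < x) (hxb : x < b) (hH : ContinuousOn H (Icc a b))
    (hderiv : ∀ t ∈ Ioo a b, t ≠ x → HasDerivAt (fun u => r * log (u - x) + H u) (g t) t)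
    (hg : ContinuousOn g (Icc a b \ {x})) :
    Tendsto (fun ε => (∫ t in a..x - ε, g t) + ∫ t in x + ε..b, g t) (𝓝[>] 0)
      (𝓝 (r * log (b - x) + H b - (r * log (a - x) + H a))) := by
  set G := fun u => r * log (u - x) + H u
  have ftc (u v : ℝ) (hau : a ≤ u) (huv : u ≤ v) (hvb : v ≤ b) (hx : x ∉ Icc u v) :
      ∫ t in u..v, g t = G v - G u := by
    have hsub : Icc u v ⊆ Icc a b \ {x} := fun t ht =>
      ⟨⟨hau.trans ht.1, ht.2.trans hvb⟩, fun h => hx (h ▸ ht)⟩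
    refine intervalIntegral.integral_eq_sub_of_hasDerivAt_of_le huv ?_
      (fun t ht => hderiv t ⟨hau.trans_lt ht.1, ht.2.trans_le hvb⟩
        fun h => hx (h ▸ Ioo_subset_Icc_self ht))
      ((hg.mono hsub).intervalIntegrable_of_Icc huv)
    refine ContinuousOn.add ?_ (hH.mono fun t ht => (hsub ht).1)
    exact continuousOn_const.mul <| (continuousOn_id.sub continuousOn_const).log
      fun t ht => sub_ne_zero.2 fun h => (hsub ht).2 h
  -- `log (-ε) = log ε`, so the singular parts at `x ∓ ε` cancel.
  have hsym : Tendsto (fun ε => G (x - ε) - G (x + ε)) (𝓝[>] 0) (𝓝 0) := by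
    have hHx := hH.continuousAt (Icc_mem_nhds hax hxb)
    have hl : Tendsto (fun ε => x - ε) (𝓝 0) (𝓝 x) := by
      simpa using (continuous_sub_left x).tendsto 0
    have hr : Tendsto (fun ε => x + ε) (𝓝 0) (𝓝 x) := by
      simpa using (continuous_const_add x).tendsto 0
    have h : Tendsto (fun ε => H (x - ε) - H (x + ε)) (𝓝 0) (𝓝 0) := by
      simpa using (hHx.tendsto.comp hl).sub (hHx.tendsto.comp hr)
    refine (h.mono_left nhdsWithin_le_nhds).congr fun ε => ?_
    simp only [G, sub_sub_cancel_left, add_sub_cancel_left, log_neg_eq_log]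
    ring
  have hδ : 0 < min (x - a) (b - x) := lt_min (sub_pos.2 hax) (sub_pos.2 hxb)
  refine (zero_add (G b - G a) ▸ hsym.add_const (G b - G a)).congr' ?_
  filter_upwards [Ioo_mem_nhdsGT hδ] with ε ⟨hε0, hε⟩
  have h1 := hε.trans_le (min_le_left _ _)
  have h2 := hε.trans_le (min_le_right _ _)
  rw [ftc a (x - ε) le_rfl (by linarith) (by linarith) (fun h => by linarith [h.2]),
    ftc (x + ε) b (by linarith) (by linarith) le_rfl (fun h => by linarith [h.1])]
  ring

theorem HasDerivAt.arcsin_of_one_sub_sq_eq {f : ℝ → ℝ} {f' k t : ℝ} (hf : HasDerivAt f f' t)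
    (hk : 0 < k) (h : 1 - f t ^ 2 = k ^ 2) : HasDerivAt (fun u => arcsin (f u)) (f' / k) t := by
  have hlt : f t ^ 2 < 1 := by nlinarith
  have h₁ : f t ≠ -1 := fun h' => by rw [h'] at hlt; norm_num at hlt
  have h₂ : f t ≠ 1 := fun h' => by rw [h'] at hlt; norm_num at hlt
  have h' := (hasDerivAt_arcsin h₁ h₂).comp t hf
  rwa [h, sqrt_sq hk.le, one_div_mul_eq_div] at h'

section Primitive

variable {a b x t : ℝ}

theorem hasDerivAt_arcsin_affine (ht : t ∈ Ioo a b) :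
    HasDerivAt (fun u => arcsin ((2 * u - a - b) / (b - a))) (1 / √((t - a) * (b - t))) t := by
  obtain ⟨hat, htb⟩ := ht
  have hba : 0 < b - a := by linarith
  have hf : HasDerivAt (fun u => (2 * u - a - b) / (b - a)) (2 / (b - a)) t := by
    simpa using ((((hasDerivAt_id t).const_mul 2).sub_const a).sub_const b).div_const (b - a)
  convert hf.arcsin_of_one_sub_sq_eq (k := 2 * √((t - a) * (b - t)) / (b - a)) (by positivity)
    ?_ using 1
  · field_simp
  · rw [div_pow, div_pow, mul_pow, sq_sqrt (mul_pos (sub_pos.2 hat) (sub_pos.2 htb)).le]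
    field_simp
    ring

theorem hasDerivAt_arcsin_moebius (ha : 0 < a) (ht : t ∈ Ioo a b) :
    HasDerivAt (fun u => arcsin (((a + b) * u - 2 * a * b) / (u * (b - a))))
      (√(a * b) / (t * √((t - a) * (b - t)))) t := by
  obtain ⟨hat, htb⟩ := ht
  have ht0 : 0 < t := ha.trans hat
  have hba : 0 < b - a := by linarith
  have hR := mul_pos (sub_pos.2 hat) (sub_pos.2 htb)
  have hab := mul_pos ha (ha.trans (hat.trans htb))
  have hf : HasDerivAt (fun u => ((a + b) * u - 2 * a * b) / (u * (b - a)))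
      (2 * a * b / (t ^ 2 * (b - a))) t := by
    refine ((((hasDerivAt_id' t).const_mul (a + b)).sub_const (2 * a * b)).div
      ((hasDerivAt_id' t).mul_const (b - a)) (by positivity)).congr_deriv ?_
    field_simp
    ring
  convert hf.arcsin_of_one_sub_sq_eq
    (k := 2 * √(a * b) * √((t - a) * (b - t)) / (t * (b - a))) (by positivity) ?_ using 1
  · field_simp
    rw [sq_sqrt hab.le]
  · simp only [div_pow, mul_pow, sq_sqrt hR.le, sq_sqrt hab.le]
    field_simp
    ring

noncomputable def mpLogArg (a b x u : ℝ) : ℝ :=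
  (x - a) * (b - u) + (b - x) * (u - a) + 2 * √((x - a) * (b - x)) * √((u - a) * (b - u))

theorem mpLogArg_pos (hax : a < x) (hxb : x < b) {u : ℝ} (hu : u ∈ Icc a b) :
    0 < mpLogArg a b x u := by
  obtain ⟨hau, hub⟩ := hu
  have : 0 < (x - a) * (b - u) + (b - x) * (u - a) := by
    nlinarith [mul_nonneg (sub_nonneg.2 hax.le) (sub_nonneg.2 hub),
      mul_nonneg (sub_nonneg.2 hxb.le) (sub_nonneg.2 hau), mul_pos (sub_pos.2 hax) (sub_pos.2 hxb)]
  unfold mpLogArg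
  positivity

theorem hasDerivAt_mpLogArg (ht : t ∈ Ioo a b) :
    HasDerivAt (mpLogArg a b x)
      (a + b - 2 * x + √((x - a) * (b - x)) * (a + b - 2 * t) / √((t - a) * (b - t))) t := by
  have hR := mul_pos (sub_pos.2 ht.1) (sub_pos.2 ht.2)
  have hR' : HasDerivAt (fun u => (u - a) * (b - u)) (a + b - 2 * t) t :=
    (((hasDerivAt_id' t).sub_const a).mul ((hasDerivAt_id' t).const_sub b)).congr_deriv (by ring)
  have hw := (hR'.sqrt hR.ne').const_mul (2 * √((x - a) * (b - x)))
  refine ((((hasDerivAt_id' t).const_sub b).const_mul (x - a)).add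
    (((hasDerivAt_id' t).sub_const a).const_mul (b - x)) |>.add hw).congr_deriv ?_
  field_simp
  ring

/-- With `R t = (t - a) (b - t)`, partial fractions turn `x √(R t) / (t (t - x))` into
`-x / √(R t) + R x / ((t - x) √(R t)) + a b / (t √(R t))`. The first arcsine integrates the first
term, `√(R x) (log (u - x) - log (mpLogArg a b x u))` the second, and the last arcsine the third. -/
noncomputable def mpPrimitiveReg (a b x u : ℝ) : ℝ :=
  -x * arcsin ((2 * u - a - b) / (b - a)) - √((x - a) * (b - x)) * log (mpLogArg a b x u)
    + √(a * b) * arcsin (((a + b) * u - 2 * a * b) / (u * (b - a)))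

theorem continuousOn_mpPrimitiveReg (ha : 0 < a) (hax : a < x) (hxb : x < b) :
    ContinuousOn (mpPrimitiveReg a b x) (Icc a b) := by
  have hN : ContinuousOn (fun u => log (mpLogArg a b x u)) (Icc a b) :=
    ContinuousOn.log (by unfold mpLogArg; fun_prop) fun u hu => (mpLogArg_pos hax hxb hu).ne'
  have hden : ∀ u ∈ Icc a b, u * (b - a) ≠ 0 := fun u hu =>
    mul_ne_zero (ha.trans_le hu.1).ne' (sub_pos.2 (hax.trans hxb)).ne'
  unfold mpPrimitiveReg
  refine ContinuousOn.add (ContinuousOn.sub (by fun_prop) (continuousOn_const.mul hN)) ?_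
  exact continuousOn_const.mul
    (continuous_arcsin.comp_continuousOn ((by fun_prop : ContinuousOn _ _).div (by fun_prop) hden))

theorem hasDerivAt_mpPrimitive (ha : 0 < a) (hax : a < x) (hxb : x < b) (ht : t ∈ Ioo a b)
    (htx : t ≠ x) :
    HasDerivAt (fun u => √((x - a) * (b - x)) * log (u - x) + mpPrimitiveReg a b x u)
      (x * √((t - a) * (b - t)) / (t * (t - x))) t := by
  have hN := mpLogArg_pos hax hxb (Ioo_subset_Icc_self ht)
  have h := ((((hasDerivAt_id' t).sub_const x).log (sub_ne_zero.2 htx)).const_mul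
    √((x - a) * (b - x))).add <|
    (((hasDerivAt_arcsin_affine ht).const_mul (-x)).sub
      (((hasDerivAt_mpLogArg (x := x) ht).log hN.ne').const_mul √((x - a) * (b - x)))).add
    ((hasDerivAt_arcsin_moebius ha ht).const_mul √(a * b))
  refine h.congr_deriv ?_
  unfold mpLogArg at hN ⊢
  set r := √((x - a) * (b - x))
  set w := √((t - a) * (b - t))
  set q := √(a * b)
  set N := (x - a) * (b - t) + (b - x) * (t - a) + 2 * r * w
  have hr2 : r ^ 2 = (x - a) * (b - x) := sq_sqrt (mul_pos (sub_pos.2 hax) (sub_pos.2 hxb)).le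
  have hw2 : w ^ 2 = (t - a) * (b - t) := sq_sqrt (mul_pos (sub_pos.2 ht.1) (sub_pos.2 ht.2)).le
  have hq2 : q ^ 2 = a * b := sq_sqrt (mul_pos ha (ha.trans (hax.trans hxb))).le
  have hw : 0 < w := sqrt_pos.2 (mul_pos (sub_pos.2 ht.1) (sub_pos.2 ht.2))
  have ht0 : 0 < t := ha.trans ht.1
  have htx' : t - x ≠ 0 := sub_ne_zero.2 htx
  have hsing : r * (1 / (t - x)) - r * ((a + b - 2 * x + r * (a + b - 2 * t) / w) / N)
      = r ^ 2 / ((t - x) * w) := by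
    have key : (w - r) * N = (t - x) * ((a + b - 2 * x) * w + r * (a + b - 2 * t)) := by
      linear_combination 2 * r * hw2 - 2 * w * hr2
    field_simp
    linear_combination r * key
  have hreg : -x * (1 / w) + r ^ 2 / ((t - x) * w) + q * (q / (t * w))
      = x * w / (t * (t - x)) := by
    field_simp
    linear_combination t * hr2 + (t - x) * hq2 - x * hw2
  linear_combination hsing + hreg

theorem mpPrimitive_sub_eq_pi_mul (ha : 0 < a) (hax : a < x) (hxb : x < b) :
    √((x - a) * (b - x)) * log (b - x) + mpPrimitiveReg a b x b
      - (√((x - a) * (b - x)) * log (a - x) + mpPrimitiveReg a b x a)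
      = π * (√(a * b) - x) := by
  have hba : b - a ≠ 0 := (sub_pos.2 (hax.trans hxb)).ne'
  have hb : b ≠ 0 := (ha.trans (hax.trans hxb)).ne'
  have e₁ : (2 * b - a - b) / (b - a) = 1 := by field_simp; ring
  have e₂ : (2 * a - a - b) / (b - a) = -1 := by field_simp; ring
  have e₃ : ((a + b) * b - 2 * a * b) / (b * (b - a)) = 1 := by field_simp; ring
  have e₄ : ((a + b) * a - 2 * a * b) / (a * (b - a)) = -1 := by field_simp; ring
  unfold mpPrimitiveReg mpLogArg
  simp only [e₁, e₂, e₃, e₄, arcsin_one, arcsin_neg_one, sub_self, mul_zero, zero_mul,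
    sqrt_zero, zero_add, add_zero]
  rw [show a - x = -(x - a) by ring, log_neg_eq_log, log_mul (sub_pos.2 hxb).ne' hba,
    log_mul (sub_pos.2 hax).ne' hba]
  ring

end Primitive

theorem fMP_eq_sqrt_div (c t : ℝ) :
    fMP c t = √((t - (1 - √c) ^ 2) * ((1 + √c) ^ 2 - t)) / (2 * π * c * t) := by
  unfold fMP
  split_ifs with h
  · rfl
  have hle : (1 - √c) ^ 2 ≤ (1 + √c) ^ 2 := by nlinarith [sqrt_nonneg c]
  rw [sqrt_eq_zero'.2, zero_div]
  rcases not_and_or.1 h with h | h <;> rw [not_lt] at h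
  · exact mul_nonpos_of_nonpos_of_nonneg (by linarith) (by linarith)
  · exact mul_nonpos_of_nonneg_of_nonpos (by linarith) (by linarith)

/-- The Hilbert transform of the Marčenko–Pastur law: for `x ∈ (λ₋, λ₊)`,
the principal value integral `PV ∫ f_MP(t)/(t-x) dt` exists and equals
`(1 - c - x)/(2cx)`. -/
theorem hilbertTransform_marchenkoPastur
    (c x : ℝ) (hc0 : 0 < c) (hc1 : c < 1)
    (hx1 : (1 - Real.sqrt c) ^ 2 < x) (hx2 : x < (1 + Real.sqrt c) ^ 2) :
    Filter.Tendsto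
      (fun ε : ℝ =>
        (∫ t in ((1 - Real.sqrt c) ^ 2)..(x - ε), fMP c t / (t - x)) +
          ∫ t in (x + ε)..((1 + Real.sqrt c) ^ 2), fMP c t / (t - x))
      (nhdsWithin 0 (Set.Ioi 0))
      (nhds ((1 - c - x) / (2 * c * x))) := by
  set a := (1 - √c) ^ 2
  set b := (1 + √c) ^ 2
  have hsc : √c ^ 2 = c := sq_sqrt hc0.le
  have ha : 0 < a := pow_pos (sub_pos.2 ((sqrt_lt' one_pos).2 (by simpa using hc1))) 2
  have hx0 : 0 < x := ha.trans hx1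
  have hq : √(a * b) = 1 - c := by
    rw [← mul_pow, show (1 - √c) * (1 + √c) = 1 - c by linear_combination -hsc,
      sqrt_sq (sub_nonneg.2 hc1.le)]
  have hf : (fun t => fMP c t / (t - x))
      = fun t => x * √((t - a) * (b - t)) / (t * (t - x)) / (2 * π * c * x) := by
    funext t
    rw [fMP_eq_sqrt_div, div_div, div_div,
      show t * (t - x) * (2 * π * c * x) = x * (2 * π * c * t * (t - x)) by ring,
      mul_div_mul_left _ _ hx0.ne']
  have hg : ContinuousOn (fun t => x * √((t - a) * (b - t)) / (t * (t - x))) (Icc a b \ {x}) :=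
    ContinuousOn.div (by fun_prop) (by fun_prop) fun t ht =>
      mul_ne_zero (ha.trans_le ht.1.1).ne' (sub_ne_zero.2 ht.2)
  have h := (tendsto_integral_add_integral_of_hasDerivAt_log_add hx1 hx2
    (continuousOn_mpPrimitiveReg ha hx1 hx2)
    (fun t ht htx => hasDerivAt_mpPrimitive ha hx1 hx2 ht htx) hg).div_const (2 * π * c * x)
  rw [mpPrimitive_sub_eq_pi_mul ha hx1 hx2, hq] at h
  simp_rw [hf, intervalIntegral.integral_div, ← add_div]
  convert h using 2
  field_simp
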